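/- Let {P_i}_{i=1}^N be positive definite solutions of the HCREs, let P_{i,k} be the iterates of the iterative law started from arbitrary positive definite initial matrices, and set P̃_{i,k} = (∑_{j=1}^N l_{ij} P_{j,k}^{-1})^{-1}, P̃_i = (∑_{j=1}^N l_{ij} P_j^{-1})^{-1}. Define Ã_{ij,k} = √(l_{ij}) · P̃_{i,k} P_{j,k}^{-1} · A (P̃_{j,k-1}^{-1} + S_j)^{-1} P̃_{j,k-1}^{-1} and Ã_{ij} = √(l_{ij}) · P̃_i P_j^{-1} · A (P̃_j^{-1} + S_j)^{-1} P̃_j^{-1}. Then for every i ∈ {1, …, N} and every k ≥ 1, P̃_{i,k} − P̃_i = ∑_{j=1}^N Ã_{ij,k} (P̃_{j,k-1} − P̃_j) Ã_{ij}ᵀ. -/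

import Mathlib

open Matrix

/-!
Three applications of the resolvent identity `X⁻¹ - Y⁻¹ = X⁻¹ (Y - X) Y⁻¹` give the formula: to the
harmonic means `P̃ = (∑ l • P⁻¹)⁻¹`, to each `P_j⁻¹`, and to the Riccati map
`X ↦ A (X⁻¹ + S)⁻¹ Aᵀ + Q`, through which `P_{j,k}` and `P_j` depend on `P̃_{j,k-1}` and `P̃_j`.
The iterates stay positive definite, so every inverse involved is a genuine one, and the symmetry of
`P_j`, `P̃_j` and `S_j` identifies the right-hand factor with `Ã_{ij}ᵀ`.
-/

namespace Matrix

variable {ι κ : Type*} [Fintype κ]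

section CommRing

variable {K : Type*} [CommRing K] [Fintype ι] [DecidableEq ι]

theorem nonsing_inv_sub_nonsing_inv {X Y : Matrix ι ι K} (hX : IsUnit X) (hY : IsUnit Y) :
    X⁻¹ - Y⁻¹ = X⁻¹ * (Y - X) * Y⁻¹ := by
  simp only [nonsing_inv_eq_ringInverse]
  exact Ring.inverse_sub_inverse (iff_of_true hX hY)

theorem nonsing_inv_sub_nonsing_inv' {X Y : Matrix ι ι K} (hX : IsUnit X) (hY : IsUnit Y) :
    X⁻¹ - Y⁻¹ = Y⁻¹ * (Y - X) * X⁻¹ := by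
  rw [← neg_sub, nonsing_inv_sub_nonsing_inv hY hX, ← neg_sub X Y, mul_neg, neg_mul]

noncomputable def harmonicMean (w : κ → K) (M : κ → Matrix ι ι K) : Matrix ι ι K :=
  (∑ j, w j • (M j)⁻¹)⁻¹

theorem inv_harmonicMean {w : κ → K} {M : κ → Matrix ι ι K} (h : IsUnit (∑ j, w j • (M j)⁻¹)) :
    (harmonicMean w M)⁻¹ = ∑ j, w j • (M j)⁻¹ :=
  nonsing_inv_nonsing_inv _ ((isUnit_iff_isUnit_det _).mp h)

theorem harmonicMean_sub_harmonicMean {w : κ → K} {M M' : κ → Matrix ι ι K}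
    (hM : ∀ j, IsUnit (M j)) (hM' : ∀ j, IsUnit (M' j))
    (h : IsUnit (∑ j, w j • (M j)⁻¹)) (h' : IsUnit (∑ j, w j • (M' j)⁻¹)) :
    harmonicMean w M' - harmonicMean w M =
      ∑ j, w j • (harmonicMean w M' * (M' j)⁻¹ * (M' j - M j) * (M j)⁻¹ * harmonicMean w M) := by
  rw [harmonicMean, harmonicMean, nonsing_inv_sub_nonsing_inv h' h, ← Finset.sum_sub_distrib,
    Finset.mul_sum, Finset.sum_mul]
  refine Finset.sum_congr rfl fun j _ => ?_
  rw [← smul_sub, nonsing_inv_sub_nonsing_inv' (hM j) (hM' j), mul_smul_comm, smul_mul_assoc]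
  simp only [Matrix.mul_assoc]

noncomputable def riccatiMap (A Q S X : Matrix ι ι K) : Matrix ι ι K :=
  A * (X⁻¹ + S)⁻¹ * Aᵀ + Q

theorem riccatiMap_sub_riccatiMap {A Q S X Y : Matrix ι ι K} (hX : IsUnit X) (hY : IsUnit Y)
    (hXS : IsUnit (X⁻¹ + S)) (hYS : IsUnit (Y⁻¹ + S)) :
    riccatiMap A Q S X - riccatiMap A Q S Y =
      A * (X⁻¹ + S)⁻¹ * X⁻¹ * (X - Y) * Y⁻¹ * (Y⁻¹ + S)⁻¹ * Aᵀ := by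
  rw [riccatiMap, riccatiMap, add_sub_add_right_eq_sub, ← Matrix.sub_mul, ← Matrix.mul_sub,
    nonsing_inv_sub_nonsing_inv hXS hYS, add_sub_add_right_eq_sub,
    nonsing_inv_sub_nonsing_inv' hY hX]
  simp only [Matrix.mul_assoc]

end CommRing

theorem PosSemidef.transpose_eq {m : Type*} {M : Matrix m m ℝ} (hM : M.PosSemidef) : Mᵀ = M :=
  (isHermitian_iff_isSymm.mp hM.isHermitian).eq

theorem posSemidef_transpose_mul_mul_same {l m : Type*} [Fintype l] [Fintype m] {M : Matrix l l ℝ}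
    (hM : M.PosSemidef) (B : Matrix l m ℝ) : (Bᵀ * M * B).PosSemidef := by
  simpa only [conjTranspose_eq_transpose_of_trivial] using hM.conjTranspose_mul_mul_same B

theorem posDef_sum_smul [Fintype ι] {w : κ → ℝ} (hw : ∀ j, 0 ≤ w j) (hw1 : ∑ j, w j = 1)
    {M : κ → Matrix ι ι ℝ} (hM : ∀ j, (M j).PosDef) : (∑ j, w j • M j).PosDef := by
  classical
  obtain ⟨j₀, -, hj₀⟩ : ∃ j ∈ Finset.univ, (0 : κ → ℝ) j < w j :=
    Finset.exists_lt_of_sum_lt (by simp [hw1])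
  rw [← Finset.add_sum_erase _ _ (Finset.mem_univ j₀)]
  exact ((hM j₀).smul hj₀).add_posSemidef
    (posSemidef_sum _ fun j _ => (hM j).posSemidef.smul (hw j))

theorem sqrt_smul_mul_mul_transpose_sqrt_smul {l m p q : Type*} [Fintype m] [Fintype p] {c : ℝ}
    (hc : 0 ≤ c) (U : Matrix l m ℝ) (D : Matrix m p ℝ) (V : Matrix q p ℝ) :
    (√c • U) * D * (√c • V)ᵀ = c • (U * D * Vᵀ) := by
  rw [transpose_smul, Matrix.smul_mul, Matrix.smul_mul, Matrix.mul_smul, smul_smul,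
    Real.mul_self_sqrt hc]

variable [Fintype ι] [DecidableEq ι]

theorem harmonicMean_posDef {w : κ → ℝ} (hw : ∀ j, 0 ≤ w j) (hw1 : ∑ j, w j = 1)
    {M : κ → Matrix ι ι ℝ} (hM : ∀ j, (M j).PosDef) : (harmonicMean w M).PosDef :=
  (posDef_sum_smul hw hw1 fun j => (hM j).inv).inv

theorem riccatiMap_posDef {A Q S X : Matrix ι ι ℝ} (hX : X.PosDef) (hS : S.PosSemidef)
    (hQ : Q.PosDef) : (riccatiMap A Q S X).PosDef := by
  have h := posSemidef_transpose_mul_mul_same (hX.inv.add_posSemidef hS).inv.posSemidef Aᵀ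
  rw [transpose_transpose] at h
  exact PosDef.posSemidef_add h hQ

end Matrix

theorem hcre_iterate_gap_identity_general
    (n N : ℕ)
    (m : Fin N → ℕ)
    (A : Matrix (Fin n) (Fin n) ℝ)
    (C : ∀ i : Fin N, Matrix (Fin (m i)) (Fin n) ℝ)
    (Q : Matrix (Fin n) (Fin n) ℝ) (hQ : Q.PosDef)
    (R : ∀ i : Fin N, Matrix (Fin (m i)) (Fin (m i)) ℝ) (hR : ∀ i, (R i).PosDef)
    (L : Matrix (Fin N) (Fin N) ℝ)
    (hLnonneg : ∀ i j, 0 ≤ L i j) (hLrow : ∀ i, ∑ j, L i j = 1)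
    (S : Fin N → Matrix (Fin n) (Fin n) ℝ)
    (hS : ∀ j, S j = ∑ h, L j h • ((C h)ᵀ * (R h)⁻¹ * C h))
    (P : Fin N → Matrix (Fin n) (Fin n) ℝ) (hPpos : ∀ i, (P i).PosDef)
    (hsol : ∀ i, P i =
      A * (∑ j, (L i j • (P j)⁻¹ + L i j • ((C j)ᵀ * (R j)⁻¹ * C j)))⁻¹ * Aᵀ + Q)
    (P0 : Fin N → Matrix (Fin n) (Fin n) ℝ) (hP0 : ∀ i, (P0 i).PosDef)
    (Pseq : ℕ → Fin N → Matrix (Fin n) (Fin n) ℝ)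
    (hinit : Pseq 0 = P0)
    (hiter : ∀ k i, Pseq (k + 1) i =
      A * (∑ j, (L i j • (Pseq k j)⁻¹ + L i j • ((C j)ᵀ * (R j)⁻¹ * C j)))⁻¹ * Aᵀ + Q)
    (Ptil : Fin N → Matrix (Fin n) (Fin n) ℝ)
    (hPtil : ∀ i, Ptil i = (∑ j, L i j • (P j)⁻¹)⁻¹)
    (Ptilseq : ℕ → Fin N → Matrix (Fin n) (Fin n) ℝ)
    (hPtilseq : ∀ k i, Ptilseq k i = (∑ j, L i j • (Pseq k j)⁻¹)⁻¹)
    (Atil : Fin N → Fin N → Matrix (Fin n) (Fin n) ℝ)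
    (hAtil : ∀ i j, Atil i j = Real.sqrt (L i j) •
      (Ptil i * (P j)⁻¹ * (A * ((Ptil j)⁻¹ + S j)⁻¹ * (Ptil j)⁻¹)))
    (Atilseq : ℕ → Fin N → Fin N → Matrix (Fin n) (Fin n) ℝ)
    (hAtilseq : ∀ k i j, Atilseq (k + 1) i j = Real.sqrt (L i j) •
      (Ptilseq (k + 1) i * (Pseq (k + 1) j)⁻¹ *
        (A * ((Ptilseq k j)⁻¹ + S j)⁻¹ * (Ptilseq k j)⁻¹))) :
    ∀ (i : Fin N) (k : ℕ),
      Ptilseq (k + 1) i - Ptil i =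
        ∑ j, Atilseq (k + 1) i j * (Ptilseq k j - Ptil j) * (Atil i j)ᵀ := by
  have hS_psd (j : Fin N) : (S j).PosSemidef := hS j ▸ posSemidef_sum _ fun h _ =>
    (posSemidef_transpose_mul_mul_same (hR h).inv.posSemidef (C h)).smul (hLnonneg j h)
  have hsum_pos {M : Fin N → Matrix (Fin n) (Fin n) ℝ} (hM : ∀ j, (M j).PosDef) (i : Fin N) :
      (∑ j, L i j • (M j)⁻¹).PosDef :=
    posDef_sum_smul (hLnonneg i) (hLrow i) fun j => (hM j).inv
  have hlaw {M : Fin N → Matrix (Fin n) (Fin n) ℝ} (hM : ∀ j, (M j).PosDef) (i : Fin N) :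
      A * (∑ j, (L i j • (M j)⁻¹ + L i j • ((C j)ᵀ * (R j)⁻¹ * C j)))⁻¹ * Aᵀ + Q =
        riccatiMap A Q (S i) (harmonicMean (L i) M) := by
    rw [Finset.sum_add_distrib, ← hS i, ← inv_harmonicMean (hsum_pos hM i).isUnit, riccatiMap]
  have hPseq (k : ℕ) : ∀ j, (Pseq k j).PosDef := by
    induction k with
    | zero => exact hinit ▸ hP0
    | succ k ih => exact fun j => hiter k j ▸ hlaw ih j ▸
        riccatiMap_posDef (harmonicMean_posDef (hLnonneg j) (hLrow j) ih) (hS_psd j) hQ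
  have hPtil' (i : Fin N) : Ptil i = harmonicMean (L i) P := hPtil i
  have hPtilseq' (k : ℕ) (i : Fin N) : Ptilseq k i = harmonicMean (L i) (Pseq k) := hPtilseq k i
  have hPtil_pos (i : Fin N) : (Ptil i).PosDef :=
    hPtil' i ▸ harmonicMean_posDef (hLnonneg i) (hLrow i) hPpos
  have hPtilseq_pos (k : ℕ) (i : Fin N) : (Ptilseq k i).PosDef :=
    hPtilseq' k i ▸ harmonicMean_posDef (hLnonneg i) (hLrow i) (hPseq k)
  intro i k
  have hgap (j : Fin N) : Pseq (k + 1) j - P j = A * ((Ptilseq k j)⁻¹ + S j)⁻¹ * (Ptilseq k j)⁻¹ *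
      (Ptilseq k j - Ptil j) * (Ptil j)⁻¹ * ((Ptil j)⁻¹ + S j)⁻¹ * Aᵀ := by
    rw [hiter, hsol, hlaw (hPseq k), hlaw hPpos, ← hPtil', ← hPtilseq']
    exact riccatiMap_sub_riccatiMap (hPtilseq_pos k j).isUnit (hPtil_pos j).isUnit
      ((hPtilseq_pos k j).inv.add_posSemidef (hS_psd j)).isUnit
      ((hPtil_pos j).inv.add_posSemidef (hS_psd j)).isUnit
  rw [hPtil' i, hPtilseq' (k + 1) i, harmonicMean_sub_harmonicMean (fun j => (hPpos j).isUnit)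
    (fun j => (hPseq (k + 1) j).isUnit) (hsum_pos hPpos i).isUnit (hsum_pos (hPseq (k + 1)) i).isUnit,
    ← hPtil' i, ← hPtilseq' (k + 1) i]
  refine Finset.sum_congr rfl fun j _ => ?_
  rw [hAtilseq, hAtil, sqrt_smul_mul_mul_transpose_sqrt_smul (hLnonneg i j), hgap]
  simp only [transpose_mul, transpose_nonsing_inv, transpose_add, Matrix.mul_assoc,
    (hPpos j).posSemidef.transpose_eq, (hPtil_pos i).posSemidef.transpose_eq,
    (hPtil_pos j).posSemidef.transpose_eq, (hS_psd j).transpose_eq]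

/-- For the HCRE iterates and a group of positive definite solutions,
the gap of the harmonic means satisfies, for every `k ≥ 1` (written `k + 1`),
`P̃_{i,k+1} − P̃_i = ∑_j Ã_{ij,k+1} (P̃_{j,k} − P̃_j) Ã_{ij}ᵀ`. -/
theorem hcre_iterate_gap_identity
    (n N : ℕ) (hn : 0 < n) (hN : 0 < N)
    (m : Fin N → ℕ) (hm : ∀ i, 0 < m i)
    (A : Matrix (Fin n) (Fin n) ℝ) (hA : IsUnit A.det)
    (C : ∀ i : Fin N, Matrix (Fin (m i)) (Fin n) ℝ)
    (hObs : (∑ k ∈ Finset.range n, (A ^ k)ᵀ * (∑ i, (C i)ᵀ * C i) * A ^ k).PosDef)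
    (Q : Matrix (Fin n) (Fin n) ℝ) (hQ : Q.PosDef)
    (R : ∀ i : Fin N, Matrix (Fin (m i)) (Fin (m i)) ℝ) (hR : ∀ i, (R i).PosDef)
    (L : Matrix (Fin N) (Fin N) ℝ)
    (hLnonneg : ∀ i j, 0 ≤ L i j) (hLrow : ∀ i, ∑ j, L i j = 1)
    (hLprim : ∃ k : ℕ, 0 < k ∧ ∀ i j, 0 < (L ^ k) i j)
    (S : Fin N → Matrix (Fin n) (Fin n) ℝ)
    (hS : ∀ j, S j = ∑ h, L j h • ((C h)ᵀ * (R h)⁻¹ * C h))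
    (P : Fin N → Matrix (Fin n) (Fin n) ℝ) (hPpos : ∀ i, (P i).PosDef)
    (hsol : ∀ i, P i =
      A * (∑ j, (L i j • (P j)⁻¹ + L i j • ((C j)ᵀ * (R j)⁻¹ * C j)))⁻¹ * Aᵀ + Q)
    (P0 : Fin N → Matrix (Fin n) (Fin n) ℝ) (hP0 : ∀ i, (P0 i).PosDef)
    (Pseq : ℕ → Fin N → Matrix (Fin n) (Fin n) ℝ)
    (hinit : Pseq 0 = P0)
    (hiter : ∀ k i, Pseq (k + 1) i =
      A * (∑ j, (L i j • (Pseq k j)⁻¹ + L i j • ((C j)ᵀ * (R j)⁻¹ * C j)))⁻¹ * Aᵀ + Q)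
    (Ptil : Fin N → Matrix (Fin n) (Fin n) ℝ)
    (hPtil : ∀ i, Ptil i = (∑ j, L i j • (P j)⁻¹)⁻¹)
    (Ptilseq : ℕ → Fin N → Matrix (Fin n) (Fin n) ℝ)
    (hPtilseq : ∀ k i, Ptilseq k i = (∑ j, L i j • (Pseq k j)⁻¹)⁻¹)
    (Atil : Fin N → Fin N → Matrix (Fin n) (Fin n) ℝ)
    (hAtil : ∀ i j, Atil i j = Real.sqrt (L i j) •
      (Ptil i * (P j)⁻¹ * (A * ((Ptil j)⁻¹ + S j)⁻¹ * (Ptil j)⁻¹)))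
    (Atilseq : ℕ → Fin N → Fin N → Matrix (Fin n) (Fin n) ℝ)
    (hAtilseq : ∀ k i j, Atilseq (k + 1) i j = Real.sqrt (L i j) •
      (Ptilseq (k + 1) i * (Pseq (k + 1) j)⁻¹ *
        (A * ((Ptilseq k j)⁻¹ + S j)⁻¹ * (Ptilseq k j)⁻¹))) :
    ∀ (i : Fin N) (k : ℕ),
      Ptilseq (k + 1) i - Ptil i =
        ∑ j, Atilseq (k + 1) i j * (Ptilseq k j - Ptil j) * (Atil i j)ᵀ :=
  hcre_iterate_gap_identity_general n N m A C Q hQ R hR L hLnonneg hLrow S hS P hPpos hsol P0 hP0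
    Pseq hinit hiter Ptil hPtil Ptilseq hPtilseq Atil hAtil Atilseq hAtilseq
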